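/- Let A be a synthetic affinographic arrangement with constructed biased graph Ω(A) and t_A(S) := ⋂_{e∈S} h_e, and let C be a circle of Ω(A). If C is balanced, then for every e ∈ C one has t_A(C) = t_A(C∖e) ≠ ∅ and the codimension of t_A(C) is #C − 1; if C is unbalanced, then t_A(C) = ∅. -/

import Mathlib

open scoped Classical

/-! ## Graphs with parallel links and half edges -/

/-- A multigraph: each edge has a finite set of endpoints
(one endpoint for a half edge, two endpoints for a link). -/
structure MGraph (N : Type*) (E : Type*) where
  ends : E → Finset N

namespace MGraph

variable {N E : Type*} (G : MGraph N E)

/-- A link has two distinct endpoints. -/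
def IsLink (e : E) : Prop := (G.ends e).card = 2

/-- A half edge has exactly one endpoint. -/
def IsHalfEdge (e : E) : Prop := (G.ends e).card = 1

/-- The set of nodes of a set of edges. -/
def nodeSet (S : Set E) : Set N := {v | ∃ e ∈ S, v ∈ G.ends e}

/-- The nodes of a finite set of edges. -/
noncomputable def nodesOf (S : Finset E) : Finset N := S.biUnion G.ends

/-- The degree of a node in a finite edge set. -/
noncomputable def degreeIn (S : Finset E) (v : N) : ℕ :=
  (S.filter (fun e => v ∈ G.ends e)).card

/-- Two nodes joined by an edge of `S`. -/
def adjIn (S : Set E) (u v : N) : Prop := ∃ e ∈ S, u ∈ G.ends e ∧ v ∈ G.ends e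

/-- Connectivity of nodes through edges of `S`. -/
def nodeConn (S : Set E) : N → N → Prop := Relation.ReflTransGen (G.adjIn S)

/-- The components of the spanning subgraph `(N, S)`, as sets of nodes. -/
def components (S : Set E) : Set (Set N) := {W | ∃ v : N, W = {u | G.nodeConn S u v}}

/-- The number of components of the spanning subgraph `(N, S)`. -/
noncomputable def numComponents (S : Set E) : ℕ := Nat.card ↥(G.components S)

/-- The components of the non-spanning subgraph `(N(S), S)`. -/
def componentsOn (S : Set E) : Set (Set N) :=
  {W | ∃ v ∈ G.nodeSet S, W = {u | G.nodeConn S u v}}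

/-- The edges of `S` whose endpoints all lie in a node set `W`. -/
def edgesIn (S : Set E) (W : Set N) : Set E := {e | e ∈ S ∧ ∀ v ∈ G.ends e, v ∈ W}

/-- An edge set is connected if any two of its edges are joined through
consecutively intersecting edges of the set. -/
def ConnEdges (S : Set E) : Prop :=
  ∀ e ∈ S, ∀ f ∈ S, Relation.ReflTransGen
    (fun a b => a ∈ S ∧ b ∈ S ∧ ∃ v : N, v ∈ G.ends a ∧ v ∈ G.ends b) e f

/-- A circle: the edge set of a connected subgraph in which every node has degree 2. -/
def IsCircle (C : Finset E) : Prop :=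
  C.Nonempty ∧ (∀ e ∈ C, G.IsLink e) ∧ G.ConnEdges ↑C ∧
    ∀ v ∈ G.nodesOf C, G.degreeIn C v = 2

/-- A (simple, open) path joining two distinct nodes `u` and `v`. -/
def IsPath (Q : Finset E) (u v : N) : Prop :=
  Q.Nonempty ∧ u ≠ v ∧ (∀ e ∈ Q, G.IsLink e) ∧ G.ConnEdges ↑Q ∧
    u ∈ G.nodesOf Q ∧ v ∈ G.nodesOf Q ∧
    G.degreeIn Q u = 1 ∧ G.degreeIn Q v = 1 ∧
    ∀ w ∈ G.nodesOf Q, w ≠ u → w ≠ v → G.degreeIn Q w = 2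

/-- A simple graph: all edges are links and no two edges have the same endpoints. -/
def IsSimple : Prop := (∀ e : E, G.IsLink e) ∧ Function.Injective G.ends

/-- The graph is connected. -/
def IsConnected : Prop := ∀ u v : N, G.nodeConn Set.univ u v

/-- Inseparable graph: connected, and for every partition of the edge set into two
nonempty parts the two parts share at least two nodes. -/
def IsInseparable : Prop :=
  G.IsConnected ∧ ∀ A B : Set E, A.Nonempty → B.Nonempty → Disjoint A B →
    A ∪ B = Set.univ → ∃ u v : N, u ≠ v ∧ u ∈ G.nodeSet A ∧ u ∈ G.nodeSet B ∧
      v ∈ G.nodeSet A ∧ v ∈ G.nodeSet B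

/-- A linear class of circles: every member is a circle and no theta subgraph (the
union of three pairwise internally disjoint paths with the same two endpoints)
contains exactly two members of the class. -/
def IsLinearClass (B : Set (Finset E)) : Prop :=
  (∀ C ∈ B, G.IsCircle C) ∧
  ∀ u v : N, ∀ P₁ P₂ P₃ : Finset E,
    G.IsPath P₁ u v → G.IsPath P₂ u v → G.IsPath P₃ u v →
    Disjoint P₁ P₂ → Disjoint P₁ P₃ → Disjoint P₂ P₃ →
    (↑(G.nodesOf P₁) ∩ ↑(G.nodesOf P₂) : Set N) = {u, v} →
    (↑(G.nodesOf P₁) ∩ ↑(G.nodesOf P₃) : Set N) = {u, v} →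
    (↑(G.nodesOf P₂) ∩ ↑(G.nodesOf P₃) : Set N) = {u, v} →
    P₁ ∪ P₂ ∈ B → P₁ ∪ P₃ ∈ B → P₂ ∪ P₃ ∈ B

/-- A balanced edge set with respect to a class `B` of balanced circles:
no half edges, and every circle inside it belongs to `B`. -/
def IsBalancedSet (B : Set (Finset E)) (S : Set E) : Prop :=
  (∀ e ∈ S, G.IsLink e) ∧ ∀ C : Finset E, ↑C ⊆ S → G.IsCircle C → C ∈ B

/-- The number of balanced components of the spanning subgraph `(N, S)`. -/
noncomputable def numBalComponents (B : Set (Finset E)) (S : Set E) : ℕ :=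
  Nat.card ↥{W : Set N | W ∈ G.components S ∧ G.IsBalancedSet B (G.edgesIn S W)}

/-- Frame matroid rank function: `rk S = #N - b(S)`. -/
noncomputable def frameRk [Fintype N] (B : Set (Finset E)) (S : Set E) : ℕ :=
  Fintype.card N - G.numBalComponents B S

/-- Graphic (cycle) matroid rank function: `rk S = #N - c(S)`. -/
noncomputable def graphicRk [Fintype N] (S : Set E) : ℕ :=
  Fintype.card N - G.numComponents S

/-- Graphic matroid rank of a finite edge set, computed inside its own node set
(valid also for infinite graphs): `rk S = #N(S) - c(N(S), S)`. -/
noncomputable def graphicRkOn (S : Finset E) : ℕ :=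
  (G.nodesOf S).card - Nat.card ↥(G.componentsOn ↑S)

/-- Extended lift matroid rank function on `E ⊕ Unit`, where `Sum.inr ()` is the
extra point `e₀`: `rk S = #N - c(S ∩ E)` if `S ⊆ E` is balanced, and
`#N - c(S ∩ E) + 1` if `S` is unbalanced or contains `e₀`. -/
noncomputable def liftRk [Fintype N] (B : Set (Finset E)) (S : Set (E ⊕ Unit)) : ℕ :=
  if G.IsBalancedSet B {e | Sum.inl e ∈ S} ∧ Sum.inr () ∉ S then
    Fintype.card N - G.numComponents {e | Sum.inl e ∈ S}
  else Fintype.card N - G.numComponents {e | Sum.inl e ∈ S} + 1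

/-- Closed sets of the frame matroid (via the rank function; the matroid is finitary). -/
def FrameClosed [Fintype N] (B : Set (Finset E)) (S : Set E) : Prop :=
  ∀ e : E, (∃ S₀ : Finset E, ↑S₀ ⊆ S ∧
    G.frameRk B ↑(insert e S₀) = G.frameRk B ↑S₀) → e ∈ S

/-- Closed sets of the extended lift matroid. -/
def LiftClosed [Fintype N] (B : Set (Finset E)) (S : Set (E ⊕ Unit)) : Prop :=
  ∀ x : E ⊕ Unit, (∃ S₀ : Finset (E ⊕ Unit), ↑S₀ ⊆ S ∧
    G.liftRk B ↑(insert x S₀) = G.liftRk B ↑S₀) → x ∈ S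

/-- The balance-closure of an edge set. -/
def bcl (B : Set (Finset E)) (S : Set E) : Set E :=
  S ∪ {e | ∃ C ∈ B, e ∈ C ∧ ↑C ⊆ S ∪ {e}}

/-- The subgraph of all links, as a graph on the same nodes. -/
def linkGraph : MGraph N {e : E // G.IsLink e} := ⟨fun e => G.ends e.val⟩

/-- Restriction of a class of circles to the subgraph of links. -/
def linkBal (B : Set (Finset E)) : Set (Finset {e : E // G.IsLink e}) :=
  {C | C.image Subtype.val ∈ B}

/-- The subgraph on a subset of the edges (spanning all nodes). -/
def sub (D : Set E) : MGraph N ↥D := ⟨fun f => G.ends f.val⟩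

end MGraph

namespace MGraph

variable {N E : Type*} {G : MGraph N E}

/-! ### Basic connectivity lemmas -/

lemma adjIn_symm {S : Set E} {u v : N} (h : G.adjIn S u v) : G.adjIn S v u := by
  obtain ⟨e, he, hu, hv⟩ := h
  exact ⟨e, he, hv, hu⟩

lemma nodeConn_refl (S : Set E) (u : N) : G.nodeConn S u u :=
  Relation.ReflTransGen.refl

lemma nodeConn_symm {S : Set E} {u v : N} (h : G.nodeConn S u v) : G.nodeConn S v u :=
  (@Relation.ReflTransGen.symmetric _ _ ⟨fun _ _ => adjIn_symm⟩).symm _ _ h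

lemma nodeConn_trans {S : Set E} {u v w : N} (h1 : G.nodeConn S u v)
    (h2 : G.nodeConn S v w) : G.nodeConn S u w :=
  Relation.ReflTransGen.trans h1 h2

lemma nodeConn_mono {S T : Set E} (hST : S ⊆ T) {u v : N} (h : G.nodeConn S u v) :
    G.nodeConn T u v :=
  Relation.ReflTransGen.mono (r := G.adjIn S) (p := G.adjIn T)
    (fun a b ⟨e, he, ha, hb⟩ => ⟨e, hST he, ha, hb⟩) u v h

lemma adjIn_of_mem {S : Set E} {e : E} (he : e ∈ S) {u v : N} (hu : u ∈ G.ends e)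
    (hv : v ∈ G.ends e) : G.adjIn S u v := ⟨e, he, hu, hv⟩

/-- Component of a node. -/
lemma components_eq_of_nodeConn {S : Set E} {v w : N} (h : G.nodeConn S v w) :
    {u | G.nodeConn S u v} = {u | G.nodeConn S u w} := by
  ext u
  exact ⟨fun hu => nodeConn_trans hu h, fun hu => nodeConn_trans hu (nodeConn_symm h)⟩

/-- If two edge sets define the same connectivity, components agree. -/
lemma components_congr {S T : Set E}
    (h : ∀ u v : N, G.nodeConn S u v ↔ G.nodeConn T u v) :
    G.components S = G.components T := by
  unfold components
  ext W
  constructor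
  · rintro ⟨v, rfl⟩
    refine ⟨v, ?_⟩
    ext u
    simp only [Set.mem_setOf_eq]
    exact h u v
  · rintro ⟨v, rfl⟩
    refine ⟨v, ?_⟩
    ext u
    simp only [Set.mem_setOf_eq]
    exact (h u v).symm

/-! ### Circles -/

variable {C : Finset E}

lemma mem_nodesOf {v : N} : v ∈ G.nodesOf C ↔ ∃ e ∈ C, v ∈ G.ends e := by
  simp [nodesOf]

lemma ends_subset_nodesOf {e : E} (he : e ∈ C) : G.ends e ⊆ G.nodesOf C :=
  fun v hv => mem_nodesOf.mpr ⟨e, he, hv⟩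

lemma IsCircle.two_le_card (hC : G.IsCircle C) : 2 ≤ C.card := by
  obtain ⟨⟨e, he⟩, hlink, _, hdeg⟩ := hC
  have h2 : (G.ends e).card = 2 := hlink e he
  obtain ⟨u, hu⟩ : ∃ u, u ∈ G.ends e := Finset.card_pos.mp (by omega)
  have hdu : (C.filter (fun f => u ∈ G.ends f)).card = 2 :=
    hdeg u (ends_subset_nodesOf he hu)
  calc 2 = (C.filter (fun f => u ∈ G.ends f)).card := hdu.symm
    _ ≤ C.card := Finset.card_le_card (Finset.filter_subset _ _)

/-- The two endpoints of a link as an explicit pair. -/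
lemma ends_eq_pair {e : E} (hl : G.IsLink e) {u v : N} (hu : u ∈ G.ends e)
    (hv : v ∈ G.ends e) (huv : u ≠ v) : G.ends e = {u, v} := by
  apply (Finset.eq_of_subset_of_card_le _ _).symm
  · intro w hw
    rcases Finset.mem_insert.mp hw with rfl | hw
    · exact hu
    · exact (Finset.mem_singleton.mp hw) ▸ hv
  · rw [hl, Finset.card_insert_of_notMem (by simp [huv]), Finset.card_singleton]

/-- Handshake: a circle has as many nodes as edges. -/
lemma IsCircle.card_nodesOf (hC : G.IsCircle C) : (G.nodesOf C).card = C.card := by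
  have key : ∑ v ∈ G.nodesOf C, G.degreeIn C v = ∑ e ∈ C, (G.ends e).card := by
    unfold degreeIn
    calc ∑ v ∈ G.nodesOf C, (C.filter (fun e => v ∈ G.ends e)).card
        = ∑ v ∈ G.nodesOf C, ∑ e ∈ C, (if v ∈ G.ends e then 1 else 0) := by
          refine Finset.sum_congr rfl (fun v _ => ?_)
          rw [Finset.card_filter]
      _ = ∑ e ∈ C, ∑ v ∈ G.nodesOf C, (if v ∈ G.ends e then 1 else 0) :=
          Finset.sum_comm
      _ = ∑ e ∈ C, (G.ends e).card := by
          refine Finset.sum_congr rfl (fun e he => ?_)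
          rw [← Finset.card_filter]
          congr 1
          ext v
          simp only [Finset.mem_filter]
          exact ⟨fun h => h.2, fun h => ⟨ends_subset_nodesOf he h, h⟩⟩
  have h1 : ∑ v ∈ G.nodesOf C, G.degreeIn C v = 2 * (G.nodesOf C).card := by
    rw [Finset.sum_congr rfl (fun v hv => hC.2.2.2 v hv), Finset.sum_const,
      smul_eq_mul, mul_comm]
  have h2 : ∑ e ∈ C, (G.ends e).card = 2 * C.card := by
    rw [Finset.sum_congr rfl (fun e he => hC.2.1 e he), Finset.sum_const,
      smul_eq_mul, mul_comm]
  omega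

/-! ### Connectivity along a circle -/

lemma conn_of_chain {S : Set E} {e f : E}
    (h : Relation.ReflTransGen
      (fun a b => a ∈ S ∧ b ∈ S ∧ ∃ w : N, w ∈ G.ends a ∧ w ∈ G.ends b) e f)
    (he : e ∈ S) {u : N} (hu : u ∈ G.ends e) : ∀ v ∈ G.ends f, G.nodeConn S u v := by
  induction h with
  | refl => exact fun v hv => Relation.ReflTransGen.single ⟨e, he, hu, hv⟩
  | tail h1 h2 IH =>
    intro v hv
    obtain ⟨hb, hc, w, hw1, hw2⟩ := h2
    exact nodeConn_trans (IH w hw1) (Relation.ReflTransGen.single ⟨_, hc, hw2, hv⟩)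

lemma IsCircle.conn (hC : G.IsCircle C) {u v : N} (hu : u ∈ G.nodesOf C)
    (hv : v ∈ G.nodesOf C) : G.nodeConn ↑C u v := by
  obtain ⟨e, he, hu⟩ := mem_nodesOf.mp hu
  obtain ⟨f, hf, hv⟩ := mem_nodesOf.mp hv
  exact conn_of_chain (hC.2.2.1 e he f hf) he hu v hv

/-- Components of the spanning subgraph of a circle. -/
lemma IsCircle.components_eq (hC : G.IsCircle C) :
    G.components ↑C =
      (fun w => ({w} : Set N)) '' (↑(G.nodesOf C) : Set N)ᶜ ∪ {(↑(G.nodesOf C) : Set N)} := by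
  have hcompT : ∀ v ∈ G.nodesOf C, {u | G.nodeConn ↑C u v} = (↑(G.nodesOf C) : Set N) := by
    intro v hv
    ext u
    simp only [Set.mem_setOf_eq, Finset.coe_biUnion, Finset.mem_coe]
    constructor
    · intro h
      rcases Relation.ReflTransGen.cases_head h with rfl | ⟨w, ⟨f, hf, hu, _⟩, _⟩
      · exact hv
      · exact ends_subset_nodesOf hf hu
    · intro h
      exact hC.conn h hv
  have hcompS : ∀ w : N, w ∉ G.nodesOf C → {u | G.nodeConn ↑C u w} = {w} := by
    intro w hw
    ext u
    simp only [Set.mem_setOf_eq, Set.mem_singleton_iff]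
    constructor
    · intro h
      rcases Relation.ReflTransGen.cases_tail h with h' | ⟨c, _, ⟨f, hf, _, hwf⟩⟩
      · exact h'.symm
      · exact absurd (ends_subset_nodesOf hf hwf) hw
    · rintro rfl
      exact Relation.ReflTransGen.refl
  ext W
  constructor
  · rintro ⟨v, rfl⟩
    by_cases hv : v ∈ G.nodesOf C
    · right
      rw [Set.mem_singleton_iff]
      exact hcompT v hv
    · left
      exact ⟨v, hv, (hcompS v hv).symm⟩
  · rintro (⟨w, hw, rfl⟩ | hW)
    · exact ⟨w, (hcompS w (by simpa using hw)).symm⟩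
    · rw [Set.mem_singleton_iff] at hW
      obtain ⟨e, he⟩ := hC.1
      have h2 : (G.ends e).card = 2 := hC.2.1 e he
      obtain ⟨v, hv⟩ : ∃ v, v ∈ G.ends e := Finset.card_pos.mp (by omega)
      exact ⟨v, by rw [hW, hcompT v (ends_subset_nodesOf he hv)]⟩

lemma IsCircle.numComponents_eq [Fintype N] (hC : G.IsCircle C) :
    G.numComponents ↑C = Fintype.card N - C.card + 1 := by
  unfold numComponents
  rw [Nat.card_coe_set_eq, hC.components_eq, Set.union_singleton,
    Set.ncard_insert_of_notMem, Set.ncard_image_of_injective _ Set.singleton_injective]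
  · rw [← Finset.coe_compl, Set.ncard_coe_finset, Finset.card_compl, hC.card_nodesOf]
  · rintro ⟨w, hw, hweq⟩
    have : w ∈ (↑(G.nodesOf C) : Set N) := by
      rw [← hweq]; exact rfl
    exact hw this

/-- Removing an edge from a circle leaves its endpoints connected. -/
lemma IsCircle.conn_erase (hC : G.IsCircle C) {e : E} (he : e ∈ C) {u v : N}
    (hu : u ∈ G.ends e) (hv : v ∈ G.ends e) (huv : u ≠ v) :
    G.nodeConn ↑(C.erase e) u v := by
  by_contra hcon
  have hue : G.ends e = {u, v} := ends_eq_pair (hC.2.1 e he) hu hv huv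
  set W' : Finset N :=
    (G.nodesOf C).filter (fun w => G.nodeConn ↑(C.erase e) w u) with hW'
  have hu' : u ∈ W' := Finset.mem_filter.mpr
    ⟨ends_subset_nodesOf he hu, Relation.ReflTransGen.refl⟩
  have hv' : v ∉ W' := by
    intro hcon'
    exact hcon (nodeConn_symm (Finset.mem_filter.mp hcon').2)
  -- degree computations
  have hdeg2 : ∀ w ∈ G.nodesOf C, w ∉ G.ends e → G.degreeIn (C.erase e) w = 2 := by
    intro w hw hwe
    unfold degreeIn
    have hnot : e ∉ C.filter (fun f => w ∈ G.ends f) :=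
      fun hmem => hwe (Finset.mem_filter.mp hmem).2
    rw [Finset.filter_erase, Finset.erase_eq_of_notMem hnot]
    exact hC.2.2.2 w hw
  have hdegu : G.degreeIn (C.erase e) u = 1 := by
    unfold degreeIn
    rw [Finset.filter_erase, Finset.card_erase_of_mem
      (Finset.mem_filter.mpr ⟨he, hu⟩)]
    have := hC.2.2.2 u (ends_subset_nodesOf he hu)
    unfold degreeIn at this
    omega
  -- the sum of degrees over W' is odd
  have hodd : ∑ w ∈ W', G.degreeIn (C.erase e) w = 2 * (W'.erase u).card + 1 := by
    rw [← Finset.sum_erase_add W' _ hu', hdegu]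
    congr 1
    rw [Finset.sum_congr rfl (fun w hw => ?_), Finset.sum_const, smul_eq_mul, mul_comm]
    have hwu : w ≠ u := (Finset.mem_erase.mp hw).1
    have hwW : w ∈ W' := (Finset.mem_erase.mp hw).2
    have hwnodes : w ∈ G.nodesOf C := (Finset.mem_filter.mp hwW).1
    apply hdeg2 w hwnodes
    intro hwe
    rw [hue] at hwe
    rcases Finset.mem_insert.mp hwe with rfl | hwe
    · exact hwu rfl
    · exact hv' ((Finset.mem_singleton.mp hwe) ▸ hwW)
  -- the sum of degrees over W' is even
  have heven : Even (∑ w ∈ W', G.degreeIn (C.erase e) w) := by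
    have hswap : ∑ w ∈ W', G.degreeIn (C.erase e) w =
        ∑ f ∈ C.erase e, (W'.filter (fun w => w ∈ G.ends f)).card := by
      unfold degreeIn
      calc ∑ w ∈ W', (( C.erase e).filter (fun f => w ∈ G.ends f)).card
          = ∑ w ∈ W', ∑ f ∈ C.erase e, (if w ∈ G.ends f then 1 else 0) := by
            exact Finset.sum_congr rfl (fun w _ => Finset.card_filter _ _)
        _ = ∑ f ∈ C.erase e, ∑ w ∈ W', (if w ∈ G.ends f then 1 else 0) :=
            Finset.sum_comm
        _ = ∑ f ∈ C.erase e, (W'.filter (fun w => w ∈ G.ends f)).card :=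
            Finset.sum_congr rfl (fun f _ => (Finset.card_filter _ _).symm)
    rw [hswap]
    refine Finset.sum_induction _ Even (fun a b ha hb => Even.add ha hb) Even.zero ?_
    intro f hf
    by_cases hfw : (W'.filter (fun w => w ∈ G.ends f)).Nonempty
    · obtain ⟨w, hw⟩ := hfw
      have hwW : w ∈ W' := (Finset.mem_filter.mp hw).1
      have hwf : w ∈ G.ends f := (Finset.mem_filter.mp hw).2
      have hfilter : W'.filter (fun x => x ∈ G.ends f) = G.ends f := by
        apply Finset.Subset.antisymm
        · exact fun x hx => (Finset.mem_filter.mp hx).2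
        · intro y hy
          refine Finset.mem_filter.mpr ⟨?_, hy⟩
          refine Finset.mem_filter.mpr
            ⟨ends_subset_nodesOf (Finset.mem_of_mem_erase hf) hy, ?_⟩
          exact nodeConn_trans
            (Relation.ReflTransGen.single ⟨f, Finset.mem_coe.mpr hf, hy, hwf⟩)
            (Finset.mem_filter.mp hwW).2
      rw [hfilter, hC.2.1 f (Finset.mem_of_mem_erase hf)]
      exact ⟨1, rfl⟩
    · rw [Finset.not_nonempty_iff_eq_empty.mp hfw]
      exact ⟨0, rfl⟩
  rw [hodd] at heven
  obtain ⟨k, hk⟩ := heven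
  omega

/-- Removing one edge from a circle does not change the components. -/
lemma IsCircle.components_erase (hC : G.IsCircle C) {e : E} (he : e ∈ C) :
    G.components ↑(C.erase e) = G.components ↑C := by
  apply components_congr
  intro u v
  constructor
  · exact nodeConn_mono (fun x hx => Finset.mem_coe.mpr
      (Finset.mem_of_mem_erase (Finset.mem_coe.mp hx)))
  · intro h
    induction h with
    | refl => exact Relation.ReflTransGen.refl
    | tail h1 h2 IH =>
      rename_i b c
      obtain ⟨f, hf, hb, hc⟩ := h2
      refine nodeConn_trans IH ?_
      by_cases hfe : f = e
      · subst hfe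
        by_cases hbc : b = c
        · exact hbc ▸ Relation.ReflTransGen.refl
        · exact hC.conn_erase he hb hc hbc
      · exact Relation.ReflTransGen.single ⟨f, Finset.mem_coe.mpr
          (Finset.mem_erase.mpr ⟨hfe, Finset.mem_coe.mp hf⟩), hb, hc⟩

/-- Components across a quotient of edges with the same endpoints. -/
lemma components_image {E' : Type*} {Δ : MGraph N E'} {π : E → E'} {S : Finset E}
    (hends : ∀ e : E, G.ends e = Δ.ends (π e)) :
    Δ.components ↑(S.image π) = G.components ↑S := by
  have hadj : ∀ u v : N, Δ.adjIn ↑(S.image π) u v ↔ G.adjIn ↑S u v := by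
    intro u v
    constructor
    · rintro ⟨g, hg, hu, hv⟩
      obtain ⟨e, heS, rfl⟩ := Finset.mem_image.mp (Finset.mem_coe.mp hg)
      exact ⟨e, heS, by rw [hends]; exact hu, by rw [hends]; exact hv⟩
    · rintro ⟨e, heS, hu, hv⟩
      exact ⟨π e, Finset.mem_coe.mpr (Finset.mem_image_of_mem π heS),
        by rw [← hends]; exact hu, by rw [← hends]; exact hv⟩
  unfold components nodeConn
  ext W
  constructor
  · rintro ⟨v, rfl⟩
    refine ⟨v, ?_⟩
    ext u
    simp only [Set.mem_setOf_eq]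
    exact ⟨fun h' => Relation.ReflTransGen.mono (fun a b h => (hadj a b).mp h) _ _ h',
      fun h' => Relation.ReflTransGen.mono (fun a b h => (hadj a b).mpr h) _ _ h'⟩
  · rintro ⟨v, rfl⟩
    refine ⟨v, ?_⟩
    ext u
    simp only [Set.mem_setOf_eq]
    exact ⟨fun h' => Relation.ReflTransGen.mono (fun a b h => (hadj a b).mpr h) _ _ h',
      fun h' => Relation.ReflTransGen.mono (fun a b h => (hadj a b).mp h) _ _ h'⟩

end MGraph

/-- A graph together with a distinguished class of "balanced" circles.
(It is a biased graph when the class is a linear class.) -/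
structure BiasedGraph (N E : Type*) extends MGraph N E where
  Bal : Set (Finset E)

/-- The complete graph on a node set `N`. -/
def completeMGraph (N : Type*) : MGraph N {q : Finset N // q.card = 2} := ⟨Subtype.val⟩

/-- A gain graph with gain group `Γ`: each edge is given by a source, a target
(equal for a half edge) and a gain in the direction from source to target. -/
structure GainGraph (N E : Type*) (Γ : Type*) [Group Γ] extends MGraph N E where
  src : E → N
  tgt : E → N
  gain : E → Γ
  ends_eq : ∀ e : E, ends e = {src e, tgt e}

namespace GainGraph

variable {N E Γ : Type*} [Group Γ] (Φ : GainGraph N E Γ)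

/-- The gain of an edge in the direction from `u` to `v`. -/
noncomputable def ogain (e : E) (u v : N) : Γ :=
  if Φ.src e = u ∧ Φ.tgt e = v then Φ.gain e else (Φ.gain e)⁻¹

/-- A balanced circle of a gain graph: a circle whose gain function is given by a
potential on the nodes (equivalently, the product of its gains along a cyclic
orientation is the identity). -/
def BalancedCircle (C : Finset E) : Prop :=
  Φ.toMGraph.IsCircle C ∧
    ∃ θ : N → Γ, ∀ e ∈ C, Φ.gain e = (θ (Φ.src e))⁻¹ * θ (Φ.tgt e)

/-- The biased graph `⟨Φ⟩` of a gain graph. -/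
def biasedGraph : BiasedGraph N E := { Φ.toMGraph with Bal := {C | Φ.BalancedCircle C} }

end GainGraph

/-- A biased expansion of a graph `Δ` along a projection `p`: `p` is surjective,
preserves endpoints, and every circle of `Δ` with a chosen lift of all but one of
its edges has a unique completion to a balanced circle. -/
def IsBiasedExpansion {N E E' : Type*} (G : MGraph N E) (B : Set (Finset E))
    (Δ : MGraph N E') (p : E → E') : Prop :=
  Function.Surjective p ∧ (∀ e : E, G.ends e = Δ.ends (p e)) ∧
  ∀ C : Finset E', Δ.IsCircle C → ∀ e₀ ∈ C, ∀ s : E' → E,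
    (∀ f ∈ C.erase e₀, p (s f) = f) →
    ∃! t : E, p t = e₀ ∧ (C.erase e₀).image s ∪ {t} ∈ B

/-! ## Axiomatic (synthetic) projective geometry -/

/-- An axiomatic projective geometry: a point set with a line through any two
points, unique when the points are distinct, every line having at least three
points, and satisfying the Veblen–Young axiom. -/
structure ProjGeom (P : Type*) where
  line : P → P → Set P
  line_self : ∀ p : P, line p p = {p}
  line_symm : ∀ p q : P, line p q = line q p
  left_mem_line : ∀ p q : P, p ∈ line p q
  right_mem_line : ∀ p q : P, q ∈ line p q
  line_unique : ∀ p q x y : P, p ≠ q → x ∈ line p q → y ∈ line p q → x ≠ y →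
    line x y = line p q
  exists_third : ∀ p q : P, p ≠ q → ∃ r ∈ line p q, r ≠ p ∧ r ≠ q
  veblen : ∀ p q r s x : P, p ≠ q → r ≠ s → p ≠ r → q ≠ s →
    x ∈ line p q → x ∈ line r s → ∃ y, y ∈ line p r ∧ y ∈ line q s

namespace ProjGeom

variable {P : Type*} (G : ProjGeom P)

/-- A flat (subspace): a line-closed set of points. -/
def IsFlat (t : Set P) : Prop := ∀ p ∈ t, ∀ q ∈ t, G.line p q ⊆ t

/-- The span of a point set: the smallest flat containing it. -/
def span (A : Set P) : Set P := ⋂₀ {t : Set P | G.IsFlat t ∧ A ⊆ t}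

/-- An independent point set: no point is in the span of the others. -/
def Indep (A : Set P) : Prop := ∀ a ∈ A, a ∉ G.span (A \ {a})

/-- The (matroid) rank of a point set: the largest cardinality of a finite
independent subset. -/
noncomputable def rank (A : Set P) : ℕ :=
  sSup {n : ℕ | ∃ B : Finset P, ↑B ⊆ A ∧ G.Indep ↑B ∧ B.card = n}

/-- A hyperplane: a maximal proper flat. -/
def IsHyperplane (h : Set P) : Prop :=
  G.IsFlat h ∧ h ≠ Set.univ ∧ ∀ t : Set P, G.IsFlat t → h ⊆ t → t = h ∨ t = Set.univ

/-- The codimension of a flat: the least number of hyperplanes intersecting in it. -/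
noncomputable def codim (t : Set P) : ℕ :=
  sInf {n : ℕ | ∃ H : Finset (Set P), H.card = n ∧ (∀ h ∈ H, G.IsHyperplane h) ∧
    ⋂₀ ↑H = t}

variable {N : Type*}

/-- A cross-flat with respect to an independent family `ν`: a flat containing
none of the points `ν v`. -/
def crossFlat (ν : N → P) (t : Set P) : Prop := G.IsFlat t ∧ ∀ v : N, ν v ∉ t

/-- The union of all edge lines of the independent family `ν`. -/
def edgeLineUnion (ν : N → P) : Set P :=
  ⋃ (v : N) (w : N) (_ : v ≠ w), G.line (ν v) (ν w)

/-! ### The Menelaean (point) construction for the frame matroid -/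

/-- The underlying graph of the Menelaean construction `Ω(N̂, Ehat)`: a point of `Ehat`
in `N̂` is a half edge, any other point is a link joining the ends of its edge line. -/
noncomputable def menGraph (ν : N → P) (Ehat : Set P)
    (hE : ∀ x ∈ Ehat, x ∉ Set.range ν →
      ∃ pr : N × N, pr.1 ≠ pr.2 ∧ x ∈ G.line (ν pr.1) (ν pr.2)) :
    MGraph N ↥Ehat where
  ends e :=
    if h : (e : P) ∈ Set.range ν then {(show ∃ v : N, ν v = ↑e from h).choose}
    else {(hE e e.2 h).choose.1, (hE e e.2 h).choose.2}

/-- The balanced circles of the Menelaean construction: circles whose point set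
lies in a cross-flat. -/
noncomputable def menBal (ν : N → P) (Ehat : Set P)
    (hE : ∀ x ∈ Ehat, x ∉ Set.range ν →
      ∃ pr : N × N, pr.1 ≠ pr.2 ∧ x ∈ G.line (ν pr.1) (ν pr.2)) :
    Set (Finset ↥Ehat) :=
  {C | (G.menGraph ν Ehat hE).IsCircle C ∧
    ∃ t : Set P, G.crossFlat ν t ∧ ∀ e ∈ C, (e : P) ∈ t}

/-! ### The Cevian (hyperplane) construction for the frame matroid -/

/-- A Cevian arrangement over the point basis `ν`, described by its associated
graph `Γ` and its apex function: a link `e` with endpoints `v, w` has its apex on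
the edge line `v̂ŵ`, off the basis; a half edge at `v` has apex `ν v`. -/
def IsCevian {E : Type*} (ν : N → P) (Γ : MGraph N E) (apex : E → P) : Prop :=
  ∀ e : E,
    (∃ v w : N, v ≠ w ∧ Γ.ends e = ({v, w} : Finset N) ∧
      apex e ∈ G.line (ν v) (ν w) ∧ apex e ∉ Set.range ν) ∨
    (∃ v : N, Γ.ends e = ({v} : Finset N) ∧ apex e = ν v)

/-- The apical hyperplane of an edge of a Cevian arrangement. -/
def cevHyp {E : Type*} (ν : N → P) (Γ : MGraph N E) (apex : E → P) (e : E) : Set P :=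
  if Γ.IsLink e then G.span ((ν '' {u : N | u ∉ Γ.ends e}) ∪ {apex e})
  else G.span (ν '' {u : N | u ∉ Γ.ends e})

/-- The rank function of a Cevian arrangement:
the codimension of the intersection of the corresponding apical hyperplanes. -/
noncomputable def cevRk {E : Type*} (ν : N → P) (Γ : MGraph N E) (apex : E → P)
    (S : Finset E) : ℕ :=
  G.codim (⋂ e ∈ S, G.cevHyp ν Γ apex e)

/-- The balanced circles of a Cevian arrangement:
circles of deficient hyperplane-intersection rank. -/
noncomputable def cevBal {E : Type*} (ν : N → P) (Γ : MGraph N E) (apex : E → P) :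
    Set (Finset E) :=
  {C | Γ.IsCircle C ∧ G.cevRk ν Γ apex C < C.card}

/-! ### The orthographic (point) construction for the lift matroid -/

/-- The projection of the orthographic construction: each point of `Ehat` lies on the
edge line `z'(f)e₀` of a unique edge `f` of `Δ`. -/
noncomputable def orthoProj {E' : Type*} (z' : E' → P) (e₀ : P) (Ehat : Set P)
    (hE : ∀ x ∈ Ehat, ∃ f : E', x ∈ G.line (z' f) e₀) : ↥Ehat → E' :=
  fun e => (hE e e.2).choose

/-- The underlying graph of the orthographic construction `Ω₀(Ehat)`. -/
noncomputable def orthoGraph {E' : Type*} (Δ : MGraph N E') (z' : E' → P) (e₀ : P)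
    (Ehat : Set P) (hE : ∀ x ∈ Ehat, ∃ f : E', x ∈ G.line (z' f) e₀) : MGraph N ↥Ehat :=
  ⟨fun e => Δ.ends (G.orthoProj z' e₀ Ehat hE e)⟩

/-- The balanced circles of the orthographic construction:
circles spanning a cross-flat (a flat not containing `e₀`). -/
noncomputable def orthoBal {E' : Type*} (Δ : MGraph N E') (z' : E' → P) (e₀ : P)
    (Ehat : Set P) (hE : ∀ x ∈ Ehat, ∃ f : E', x ∈ G.line (z' f) e₀) : Set (Finset ↥Ehat) :=
  {C | (G.orthoGraph Δ z' e₀ Ehat hE).IsCircle C ∧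
    e₀ ∉ G.span (Subtype.val '' (↑C : Set ↥Ehat))}

end ProjGeom

namespace ProjGeom

/-! basic facts -/

variable {P : Type*} {G : ProjGeom P}

lemma isFlat_univ : G.IsFlat (Set.univ : Set P) := fun _ _ _ _ _ _ => trivial

lemma isFlat_sInter {F : Set (Set P)} (h : ∀ t ∈ F, G.IsFlat t) : G.IsFlat (⋂₀ F) := by
  intro p hp q hq x hx t ht
  exact h t ht p (hp t ht) q (hq t ht) hx

lemma isFlat_inter {s t : Set P} (hs : G.IsFlat s) (ht : G.IsFlat t) :
    G.IsFlat (s ∩ t) := by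
  intro p hp q hq
  exact Set.subset_inter (hs p hp.1 q hq.1) (ht p hp.2 q hq.2)

lemma isFlat_biInter {ι : Sort*} {p : ι → Prop} {t : ι → Set P}
    (h : ∀ i, p i → G.IsFlat (t i)) : G.IsFlat (⋂ i, ⋂ (_ : p i), t i) := by
  intro a ha b hb x hx
  rw [Set.mem_iInter₂] at ha hb ⊢
  intro i hi
  exact h i hi a (ha i hi) b (hb i hi) hx

lemma isFlat_span (A : Set P) : G.IsFlat (G.span A) :=
  isFlat_sInter (fun _ ht => ht.1)

lemma subset_span {A : Set P} : A ⊆ G.span A := by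
  intro x hx t ht
  exact ht.2 hx

lemma span_le {A t : Set P} (ht : G.IsFlat t) (h : A ⊆ t) : G.span A ⊆ t :=
  Set.sInter_subset_of_mem ⟨ht, h⟩

lemma IsFlat.span_eq {t : Set P} (ht : G.IsFlat t) : G.span t = t :=
  le_antisymm (span_le ht le_rfl) subset_span

lemma line_reorient {p q x : P} (hpq : p ≠ q) (hx : x ∈ G.line p q) (hxp : x ≠ p) :
    G.line p x = G.line p q :=
  G.line_unique p q p x hpq (G.left_mem_line p q) hx (Ne.symm hxp)

lemma mem_line_symm {p q x : P} (hx : x ∈ G.line p q) : x ∈ G.line q p := by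
  rwa [G.line_symm]

/-! ### The cone lemma -/

/-- The cone over a flat from a point. -/
def cone (G : ProjGeom P) (p : P) (t : Set P) : Set P :=
  {x | x = p ∨ x ∈ t ∨ ∃ z ∈ t, x ∈ G.line p z}

lemma subset_cone {p : P} {t : Set P} : t ⊆ G.cone p t := fun x hx => Or.inr (Or.inl hx)

lemma mem_cone_self {p : P} {t : Set P} : p ∈ G.cone p t := Or.inl rfl

lemma cone_subset_flat {p : P} {t s : Set P} (hs : G.IsFlat s) (hps : p ∈ s)
    (hts : t ⊆ s) : G.cone p t ⊆ s := by
  rintro x (rfl | hx | ⟨z, hz, hx⟩)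
  · exact hps
  · exact hts hx
  · exact hs p hps z (hts hz) hx

/-- If `x` lies on a nondegenerate line from `p` through the flat, it is a cone point,
and the whole line `p x` is in the cone. -/
lemma line_subset_cone {p : P} {t : Set P} {z : P} (hz : z ∈ t) :
    G.line p z ⊆ G.cone p t := fun x hx => Or.inr (Or.inr ⟨z, hz, hx⟩)

/-- Membership in the cone through a non-apex cone point. -/
lemma mem_cone_of_line {p : P} {t : Set P} {w x : P}
    (hw : w ∈ G.cone p t) (hwp : w ≠ p) (hx : x ∈ G.line p w) : x ∈ G.cone p t := by
  rcases hw with rfl | hw | ⟨z, hz, hwz⟩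
  · exact absurd rfl hwp
  · exact Or.inr (Or.inr ⟨w, hw, hx⟩)
  · have hzp : z ≠ p := by
      rintro rfl; rw [G.line_self] at hwz; exact hwp hwz
    have hl : G.line p w = G.line p z := line_reorient (Ne.symm hzp) hwz hwp
    exact Or.inr (Or.inr ⟨z, hz, hl ▸ hx⟩)

/-- Case 4 of the cone flatness: a line between a flat point and a cone point. -/
lemma cone_case4 {p : P} {t : Set P} (ht : G.IsFlat t) (hpt : p ∉ t)
    {a b : P} (ha : a ∈ t) (hb : b ∈ G.cone p t) : G.line a b ⊆ G.cone p t := by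
  rcases hb with rfl | hb | ⟨z, hz, hb⟩
  · rw [G.line_symm]; exact line_subset_cone ha
  · exact fun x hx => subset_cone (ht a ha b hb hx)
  · by_cases hbt : b ∈ t
    · exact fun x hx => subset_cone (ht a ha b hbt hx)
    by_cases hbp : b = p
    · subst hbp; rw [G.line_symm]; exact line_subset_cone ha
    have hzp : z ≠ p := by
      rintro rfl; rw [G.line_self] at hb; exact hbp hb
    have hab : a ≠ b := fun h => hbt (h ▸ ha)
    by_cases haz : a = z
    · subst haz
      have h1 : G.line a b = G.line p a :=
        G.line_unique p a a b (fun h => hpt (h ▸ ha)) (G.right_mem_line p a) hb hab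
      rw [h1]; exact line_subset_cone ha
    intro x hx
    by_cases hxa : x = a
    · exact subset_cone (hxa ▸ ha)
    by_cases hxb : x = b
    · exact hxb ▸ Or.inr (Or.inr ⟨z, hz, hb⟩)
    by_cases hxp : x = p
    · exact hxp ▸ mem_cone_self
    have hbza : b ∈ G.line z p := by rw [G.line_symm]; exact hb
    have hbax : b ∈ G.line a x := by
      have h2 : G.line a x = G.line a b :=
        G.line_unique a b a x hab (G.left_mem_line a b) hx (fun h => hxa h.symm)
      rw [h2]; exact G.right_mem_line a b
    obtain ⟨y, hy1, hy2⟩ := G.veblen z p a x b hzp (fun h => hxa (h.symm)) (fun h => haz h.symm)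
      (fun h => hxp h.symm) hbza hbax
    have hyt : y ∈ t := ht z hz a ha hy1
    have hyp : y ≠ p := fun h => hpt (h ▸ hyt)
    have hl : G.line p y = G.line p x :=
      line_reorient (fun h => hxp h.symm) hy2 hyp
    exact Or.inr (Or.inr ⟨y, hyt, hl ▸ G.right_mem_line p x⟩)

/-- Case 5 of the cone flatness: a line between two proper cone points. -/
lemma cone_case5 {p : P} {t : Set P} (ht : G.IsFlat t) (hpt : p ∉ t)
    {a b : P} (ha : a ∈ G.cone p t) (hb : b ∈ G.cone p t)
    (hat : a ∉ t) (hap : a ≠ p) (hbt : b ∉ t) (hbp : b ≠ p) (hab : a ≠ b) :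
    G.line a b ⊆ G.cone p t := by
  -- extract the flat points on the lines through a and b
  obtain ⟨z₁, hz₁, ha'⟩ : ∃ z ∈ t, a ∈ G.line p z := by
    rcases ha with rfl | h | h
    · exact absurd rfl hap
    · exact absurd h hat
    · exact h
  obtain ⟨z₂, hz₂, hb'⟩ : ∃ z ∈ t, b ∈ G.line p z := by
    rcases hb with rfl | h | h
    · exact absurd rfl hbp
    · exact absurd h hbt
    · exact h
  have hz₁p : z₁ ≠ p := by rintro rfl; rw [G.line_self] at ha'; exact hap ha'
  have hz₂p : z₂ ≠ p := by rintro rfl; rw [G.line_self] at hb'; exact hbp hb'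
  have hlpa : G.line p a = G.line p z₁ := line_reorient (Ne.symm hz₁p) ha' hap
  have hlpb : G.line p b = G.line p z₂ := line_reorient (Ne.symm hz₂p) hb' hbp
  by_cases h12 : z₁ = z₂
  · -- a, b on the same line through p
    subst h12
    have h3 : G.line a b = G.line p z₁ :=
      G.line_unique p z₁ a b (Ne.symm hz₁p) ha' hb' hab
    rw [h3]; exact line_subset_cone hz₁
  intro x hx
  by_cases hxa : x = a
  · exact hxa ▸ ha
  by_cases hxb : x = b
  · exact hxb ▸ hb
  by_cases hxp : x = p
  · exact hxp ▸ mem_cone_self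
  -- a ∈ line p z₁ ∩ line x b
  have haxb : a ∈ G.line x b := by
    have h4 : G.line x b = G.line a b :=
      G.line_unique a b x b hab hx (G.right_mem_line a b) (fun h => hxb h)
    rw [h4]; exact G.left_mem_line a b
  -- Veblen (p, z₁, x, b) at a : gives w ∈ line p x ∩ line z₁ b
  obtain ⟨w, hw1, hw2⟩ := G.veblen p z₁ x b a (Ne.symm hz₁p) (fun h => hxb h)
    (fun h => hxp h.symm) (fun h => hbt (h ▸ hz₁)) ha' haxb
  -- w ∈ line z₁ b ⊆ cone
  have hwc : w ∈ G.cone p t := cone_case4 ht hpt hz₁ hb hw2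
  by_cases hwp : w = p
  · -- then b ∈ line p z₁, so line a b = line p z₁
    subst hwp
    have h5 : G.line w z₁ = G.line z₁ b :=
      G.line_unique z₁ b w z₁ (fun h => hbt (h ▸ hz₁)) hw2 (G.left_mem_line z₁ b)
        (fun h => hpt (h ▸ hz₁))
    have h6 : b ∈ G.line w z₁ := h5 ▸ G.right_mem_line z₁ b
    have h7 : G.line a b = G.line w z₁ :=
      G.line_unique w z₁ a b (Ne.symm hz₁p) ha' h6 hab
    rw [h7] at hx
    exact line_subset_cone hz₁ hx
  · exact mem_cone_of_line hwc hwp (by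
      have hl : G.line p w = G.line p x := line_reorient (fun h => hxp h.symm) hw1 hwp
      rw [hl]; exact G.right_mem_line p x)

lemma isFlat_cone {p : P} {t : Set P} (ht : G.IsFlat t) : G.IsFlat (G.cone p t) := by
  by_cases hpt : p ∈ t
  · have hct : G.cone p t = t :=
      le_antisymm (cone_subset_flat ht hpt le_rfl) subset_cone
    rw [hct]; exact ht
  intro a ha b hb
  by_cases hab : a = b
  · subst hab; rw [G.line_self]; intro x hx; exact hx ▸ ha
  by_cases hat : a ∈ t
  · exact cone_case4 ht hpt hat hb
  by_cases hbt : b ∈ t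
  · rw [G.line_symm]; exact cone_case4 ht hpt hbt ha
  by_cases hap : a = p
  · subst hap
    by_cases hbp : b = a
    · exact absurd hbp.symm hab
    · intro x hx
      by_cases hxa : x = a
      · exact hxa ▸ mem_cone_self
      · exact mem_cone_of_line hb hbp hx
  by_cases hbp : b = p
  · subst hbp
    rw [G.line_symm]
    intro x hx
    by_cases hxb : x = b
    · exact hxb ▸ mem_cone_self
    · exact mem_cone_of_line ha hap hx
  exact cone_case5 ht hpt ha hb hat hap hbt hbp hab

lemma span_insert_flat {p : P} {t : Set P} (ht : G.IsFlat t) :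
    G.span (insert p t) = G.cone p t := by
  apply le_antisymm
  · apply span_le (isFlat_cone ht)
    intro x hx
    rcases hx with rfl | hx
    · exact mem_cone_self
    · exact subset_cone hx
  · apply cone_subset_flat (isFlat_span _) (subset_span (Set.mem_insert p t))
    exact le_trans (Set.subset_insert p t) subset_span

/-- Every proper extension of a flat by one point covers it. -/
lemma cone_cover {p : P} {t s : Set P} (ht : G.IsFlat t) (hpt : p ∉ t)
    (hs : G.IsFlat s) (h1 : t ⊆ s) (h2 : s ⊆ G.cone p t) (h3 : s ≠ t) :
    s = G.cone p t := by
  obtain ⟨r, hrs, hrt⟩ : ∃ r, r ∈ s ∧ r ∉ t := by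
    by_contra h
    push_neg at h
    exact h3 (le_antisymm h h1)
  have hps : p ∈ s := by
    rcases h2 hrs with h | h | ⟨z, hz, hr⟩
    · exact h ▸ hrs
    · exact absurd h hrt
    · by_cases hrp : r = p
      · exact hrp ▸ hrs
      have hrz : r ≠ z := fun h' => hrt (h' ▸ hz)
      have hpz : p ≠ z := fun h' => hpt (h' ▸ hz)
      have hl : G.line r z = G.line p z :=
        G.line_unique p z r z hpz hr (G.right_mem_line p z) hrz
      exact hs r hrs z (h1 hz) (hl ▸ G.left_mem_line p z)
  exact le_antisymm h2 (cone_subset_flat hs hps h1)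

/-- Exchange property. -/
lemma exchange {p q : P} {t : Set P} (ht : G.IsFlat t)
    (hq : q ∈ G.cone p t) (hqt : q ∉ t) : p ∈ G.cone q t := by
  rcases hq with rfl | hq | ⟨z, hz, hq⟩
  · exact mem_cone_self
  · exact absurd hq hqt
  · by_cases hqp : q = p
    · exact hqp ▸ mem_cone_self
    have hzq : z ≠ q := fun h => hqt (h ▸ hz)
    have hl : G.line q z = G.line p z := by
      have hzp : z ≠ p := by rintro rfl; rw [G.line_self] at hq; exact hqp hq
      exact G.line_unique p z q z (Ne.symm hzp) hq (G.right_mem_line p z) (Ne.symm hzq)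
    exact Or.inr (Or.inr ⟨z, hz, hl ▸ G.left_mem_line p z⟩)

/-- A hyperplane plus an external point spans everything. -/
lemma cone_hyperplane {h : Set P} (hh : G.IsHyperplane h) {p : P} (hp : p ∉ h) :
    G.cone p h = Set.univ := by
  rcases hh.2.2 (G.cone p h) (isFlat_cone hh.1) subset_cone with h1 | h1
  · exact absurd (h1 ▸ mem_cone_self) hp
  · exact h1

/-- Every line through two points off a hyperplane meets the hyperplane. -/
lemma line_meets_hyperplane {h : Set P} (hh : G.IsHyperplane h) {p q : P}
    (hp : p ∉ h) (hpq : p ≠ q) : ∃ z ∈ h, z ∈ G.line p q := by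
  by_cases hq : q ∈ h
  · exact ⟨q, hq, G.right_mem_line p q⟩
  have hq' : q ∈ G.cone p h := (cone_hyperplane hh hp).symm ▸ Set.mem_univ q
  rcases hq' with rfl | hq' | ⟨z, hz, hq'⟩
  · exact absurd rfl hpq
  · exact absurd hq' hq
  · have hzq : z ≠ q := fun h' => hq (h' ▸ hz)
    have hzp : z ≠ p := fun h' => hp (h' ▸ hz)
    have hl : G.line p q = G.line p z := line_reorient (Ne.symm hzp) hq' (Ne.symm hpq)
    exact ⟨z, hz, by rw [hl]; exact G.right_mem_line p z⟩

/-- Covering lemma: a flat not inside a hyperplane covers its intersection with it. -/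
lemma hyperplane_cover {t h s : Set P} (ht : G.IsFlat t) (hh : G.IsHyperplane h)
    (hth : ¬ t ⊆ h) (hs : G.IsFlat s) (h1 : t ∩ h ⊆ s) (h2 : s ⊆ t) :
    s = t ∩ h ∨ s = t := by
  by_cases hsh : s ⊆ h
  · exact Or.inl (le_antisymm (Set.subset_inter h2 hsh) h1)
  obtain ⟨p, hps, hph⟩ := Set.not_subset.mp hsh
  right
  apply le_antisymm h2
  intro q hq
  by_cases hqh : q ∈ h
  · exact h1 ⟨hq, hqh⟩
  by_cases hqp : q = p
  · exact hqp ▸ hps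
  obtain ⟨z, hzh, hzl⟩ := line_meets_hyperplane hh hph (fun h' => hqp h'.symm)
  have hzt : z ∈ t := ht p (h2 hps) q hq hzl
  have hzp : z ≠ p := fun h' => hph (h' ▸ hzh)
  have hl : G.line z p = G.line p q := by
    rw [G.line_symm]
    exact line_reorient (fun h' => hqp h'.symm) hzl hzp
  exact hs z (h1 ⟨hzt, hzh⟩) p hps (hl ▸ G.right_mem_line p q)

lemma cone_mono {p : P} {s t : Set P} (h : s ⊆ t) : G.cone p s ⊆ G.cone p t := by
  rintro x (rfl | hx | ⟨z, hz, hx⟩)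
  · exact mem_cone_self
  · exact subset_cone (h hx)
  · exact Or.inr (Or.inr ⟨z, h hz, hx⟩)

/-- Separation: a hyperplane through a flat missing a given external point. -/
lemma exists_hyperplane_sep {t : Set P} (ht : G.IsFlat t) {p : P} (hp : p ∉ t) :
    ∃ m : Set P, G.IsHyperplane m ∧ t ⊆ m ∧ p ∉ m := by
  have hub : ∀ c ⊆ {w : Set P | G.IsFlat w ∧ p ∉ w}, IsChain (· ⊆ ·) c → c.Nonempty →
      ∃ ub ∈ {w : Set P | G.IsFlat w ∧ p ∉ w}, ∀ s ∈ c, s ⊆ ub := by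
    intro c hc hchain hcne
    refine ⟨⋃₀ c, ⟨?_, ?_⟩, fun s hs => Set.subset_sUnion_of_mem hs⟩
    · intro a ha b hb
      obtain ⟨w₁, hw₁, ha⟩ := ha
      obtain ⟨w₂, hw₂, hb⟩ := hb
      rcases hchain.total hw₁ hw₂ with h | h
      · exact le_trans ((hc hw₂).1 a (h ha) b hb) (Set.subset_sUnion_of_mem hw₂)
      · exact le_trans ((hc hw₁).1 a ha b (h hb)) (Set.subset_sUnion_of_mem hw₁)
    · rintro ⟨w, hw, hpw⟩
      exact (hc hw).2 hpw
  obtain ⟨m, htm, hmax⟩ := zorn_subset_nonempty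
    {w : Set P | G.IsFlat w ∧ p ∉ w} hub t ⟨ht, hp⟩
  refine ⟨m, ⟨hmax.prop.1, ?_, ?_⟩, htm, hmax.prop.2⟩
  · intro h'
    exact hmax.prop.2 (h' ▸ Set.mem_univ p)
  · intro w hw hmw
    by_cases hwm : w = m
    · exact Or.inl hwm
    obtain ⟨q, hqw, hqm⟩ : ∃ q, q ∈ w ∧ q ∉ m := by
      by_contra hcon
      push_neg at hcon
      exact hwm (le_antisymm hcon hmw)
    -- p belongs to every flat strictly above m
    have key : ∀ r : P, r ∉ m → p ∈ G.cone r m := by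
      intro r hrm
      by_contra hpc
      have hmem : G.cone r m ∈ {w : Set P | G.IsFlat w ∧ p ∉ w} :=
        ⟨isFlat_cone hmax.prop.1, hpc⟩
      have := hmax.le_of_ge hmem subset_cone
      exact hrm (this mem_cone_self)
    have hpw : p ∈ w := cone_subset_flat hw hqw hmw (key q hqm)
    right
    apply Set.eq_univ_of_forall
    intro r
    by_cases hrm : r ∈ m
    · exact hmw hrm
    have hrw : r ∈ G.cone p m :=
      exchange hmax.prop.1 (key r hrm) hmax.prop.2
    exact cone_subset_flat hw hpw hmw hrw

lemma isFlat_sInter_finset {H : Finset (Set P)} (hH : ∀ h ∈ H, G.IsHyperplane h) :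
    G.IsFlat (⋂₀ ↑H) :=
  isFlat_sInter (fun t htH => (hH t htH).1)

/-- Strictness: a flat covering an intersection of `k` hyperplanes is an
intersection of fewer than `k` hyperplanes. -/
lemma cover_pres (H : Finset (Set P)) :
    ∀ t : Set P, (∀ h ∈ H, G.IsHyperplane h) → G.IsFlat t → ⋂₀ ↑H ⊆ t → ⋂₀ ↑H ≠ t →
    (∀ s : Set P, G.IsFlat s → ⋂₀ ↑H ⊆ s → s ⊆ t → s = ⋂₀ ↑H ∨ s = t) →
    ∃ H' : Finset (Set P), (∀ h ∈ H', G.IsHyperplane h) ∧ ⋂₀ ↑H' = t ∧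
      H'.card < H.card := by
  induction H using Finset.strongInductionOn with
  | _ H IH =>
  intro t hH ht hst hne hcov
  set s : Set P := ⋂₀ ↑H with hs
  -- find h₀ ∈ H not containing t
  obtain ⟨h₀, hh₀H, hth₀⟩ : ∃ h₀ ∈ H, ¬ t ⊆ h₀ := by
    by_contra hcon
    push_neg at hcon
    exact hne (le_antisymm hst (Set.subset_sInter (fun w hw => hcon w hw)))
  have hHsplit : (↑H : Set (Set P)) = insert h₀ ↑(H.erase h₀) := by
    rw [← Finset.coe_insert, Finset.insert_erase hh₀H]
  set s₁ : Set P := ⋂₀ ↑(H.erase h₀) with hs₁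
  have hss₁ : s = h₀ ∩ s₁ := by rw [hs, hHsplit, Set.sInter_insert]
  have hH₁ : ∀ h ∈ H.erase h₀, G.IsHyperplane h := fun h hh => hH h (Finset.mem_of_mem_erase hh)
  have hs₁flat : G.IsFlat s₁ := isFlat_sInter_finset hH₁
  have hcard : (H.erase h₀).card < H.card := Finset.card_erase_lt_of_mem hh₀H
  have hh₀ : G.IsHyperplane h₀ := hH h₀ hh₀H
  by_cases hts₁ : t ⊆ s₁
  · by_cases hts₁' : t = s₁
    · exact ⟨H.erase h₀, hH₁, hts₁'.symm, hcard⟩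
    · exfalso
      have hns₁h₀ : ¬ s₁ ⊆ h₀ := fun hcon => hth₀ (hts₁.trans hcon)
      rcases hyperplane_cover hs₁flat hh₀ hns₁h₀ ht (by rw [Set.inter_comm, ← hss₁]; exact hst) hts₁ with h | h
      · exact hne (by rw [h, Set.inter_comm, ← hss₁])
      · exact hts₁' h
  · -- t ⊄ s₁, hence t ∩ s₁ = s
    have hints : t ∩ s₁ = s := by
      rcases hcov (t ∩ s₁) (isFlat_inter ht hs₁flat)
        (Set.subset_inter hst (by rw [hss₁]; exact Set.inter_subset_right))
        Set.inter_subset_left with h | h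
      · exact h
      · exact absurd (h ▸ Set.inter_subset_right) hts₁
    by_cases hs₁h₀ : s₁ ⊆ h₀
    · -- then s = s₁ and we can drop h₀ entirely
      have hss : s = s₁ := by
        rw [hss₁]; exact Set.inter_eq_self_of_subset_right hs₁h₀
      obtain ⟨H', h1, h2, h3⟩ := IH (H.erase h₀) (Finset.erase_ssubset hh₀H) t hH₁ ht
        (by rw [← hs₁, ← hss]; exact hst) (by rw [← hs₁, ← hss]; exact hne)
        (fun w hw hw1 hw2 => by
          rw [← hs₁, ← hss] at hw1 ⊢
          exact hcov w hw hw1 hw2)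
      exact ⟨H', h1, h2, h3.trans hcard⟩
    · -- the main case
      obtain ⟨q₀, hq₀s₁, hq₀h₀⟩ := Set.not_subset.mp hs₁h₀
      have hq₀s : q₀ ∉ s := by rw [hss₁]; exact fun h => hq₀h₀ h.1
      obtain ⟨p, hpt, hps⟩ : ∃ p, p ∈ t ∧ p ∉ s := by
        by_contra hcon
        push_neg at hcon
        exact hne (le_antisymm hst hcon)
      have hps₁ : p ∉ s₁ := fun h => hps (hints ▸ ⟨hpt, h⟩)
      have hq₀t : q₀ ∉ t := fun h => hq₀s (hints ▸ ⟨h, hq₀s₁⟩)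
      -- the join u of t and s₁
      set u : Set P := G.cone p s₁ with hu
      have huflat : G.IsFlat u := isFlat_cone hs₁flat
      -- t = cone p s ⊆ u
      have htu : t ⊆ u := by
        have h7 : G.cone p s = t := by
          rcases hcov (G.cone p s) (isFlat_cone (hs ▸ isFlat_sInter_finset hH))
            subset_cone (cone_subset_flat ht hpt hst) with h | h
          · exact absurd (h ▸ mem_cone_self) hps
          · exact h
        rw [← h7]
        exact cone_mono (hints ▸ Set.inter_subset_right)
      -- s₁ = cone q₀ s
      have hs₁cone : s₁ = G.cone q₀ s := by
        rcases hyperplane_cover hs₁flat hh₀ hs₁h₀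
          (isFlat_cone (hs ▸ isFlat_sInter_finset hH))
          (by rw [Set.inter_comm, ← hss₁]; exact subset_cone)
          (cone_subset_flat hs₁flat hq₀s₁ (by rw [hss₁]; exact Set.inter_subset_right))
          with h | h
        · exact absurd (by rw [Set.inter_comm, ← hss₁] at h; exact h ▸ mem_cone_self) hq₀s
        · exact h.symm
      -- u = cone q₀ t
      have hucone : u = G.cone q₀ t := by
        apply le_antisymm
        · apply cone_subset_flat (isFlat_cone ht) (subset_cone hpt)
          rw [hs₁cone]
          exact cone_mono (hints ▸ Set.inter_subset_left)
        · apply cone_subset_flat huflat (subset_cone hq₀s₁) htu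
      -- apply covering lemma: s₁ ⊆ u is a cover, use IH
      have hs₁u : s₁ ≠ u := fun h => hps₁ (h ▸ mem_cone_self)
      obtain ⟨Hu, hHu1, hHu2, hHu3⟩ := IH (H.erase h₀) (Finset.erase_ssubset hh₀H) u hH₁
        huflat subset_cone hs₁u
        (fun w hw h1 h2 => by
          by_cases hws₁ : w = s₁
          · exact Or.inl hws₁
          · exact Or.inr (cone_cover hs₁flat hps₁ hw h1 h2 hws₁))
      -- find a separating hyperplane
      have htune : t ≠ u := by
        intro h
        exact hq₀t (h ▸ (subset_cone hq₀s₁ : q₀ ∈ u))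
      obtain ⟨q, hqu, hqt⟩ : ∃ q, q ∈ u ∧ q ∉ t := by
        by_contra hcon
        push_neg at hcon
        exact htune (le_antisymm htu hcon)
      obtain ⟨m, hm, htm, hqm⟩ := exists_hyperplane_sep ht hqt
      -- u ∩ m = t by the covering property of t in u
      have humne : u ∩ m ≠ u := fun hcon => hqm ((hcon.symm ▸ hqu : q ∈ u ∩ m).2)
      have hum : u ∩ m = t := by
        by_contra h10
        have h8 : u ∩ m ⊆ G.cone q₀ t := hucone ▸ Set.inter_subset_left
        have h9 : t ⊆ u ∩ m := Set.subset_inter htu htm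
        have h11 := cone_cover ht hq₀t (isFlat_inter huflat hm.1) h9 h8 h10
        rw [← hucone] at h11
        exact humne h11
      refine ⟨insert m Hu, ?_, ?_, ?_⟩
      · intro h hh
        rcases Finset.mem_insert.mp hh with rfl | hh
        · exact hm
        · exact hHu1 h hh
      · rw [Finset.coe_insert, Set.sInter_insert, hHu2, Set.inter_comm, hum]
      · calc (insert m Hu).card ≤ Hu.card + 1 := Finset.card_insert_le m Hu
          _ ≤ (H.erase h₀).card := by omega
          _ < H.card := hcard

lemma codim_le {t : Set P} {H : Finset (Set P)} (hH : ∀ g ∈ H, G.IsHyperplane g)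
    (hHt : ⋂₀ ↑H = t) : G.codim t ≤ H.card :=
  Nat.sInf_le ⟨H, rfl, hH, hHt⟩

lemma exists_pres_of_codim_ne_zero {t : Set P} (hne : G.codim t ≠ 0) :
    ∃ H : Finset (Set P), H.card = G.codim t ∧ (∀ g ∈ H, G.IsHyperplane g) ∧
      ⋂₀ ↑H = t := by
  have hnon : {n : ℕ | ∃ H : Finset (Set P), H.card = n ∧ (∀ h ∈ H, G.IsHyperplane h) ∧
      ⋂₀ ↑H = t}.Nonempty := by
    by_contra hcon
    rw [Set.not_nonempty_iff_eq_empty] at hcon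
    exact hne (by unfold codim; rw [hcon, Nat.sInf_empty])
  exact Nat.sInf_mem hnon

lemma codim_lt_of_not_subset {t h : Set P} (ht : G.IsFlat t) (hh : G.IsHyperplane h)
    (hth : ¬ t ⊆ h) {H : Finset (Set P)} (hH : ∀ g ∈ H, G.IsHyperplane g)
    (hHt : ⋂₀ ↑H = t ∩ h) : G.codim t < H.card := by
  obtain ⟨H', h1, h2, h3⟩ := cover_pres H t hH ht (hHt ▸ Set.inter_subset_left)
    (by
      rw [hHt]
      intro hcon
      exact hth (by rw [← hcon]; exact Set.inter_subset_right))
    (fun s hs hs1 hs2 => by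
      rw [hHt] at hs1 ⊢
      exact hyperplane_cover ht hh hth hs hs1 hs2)
  exact lt_of_le_of_lt (codim_le h1 h2) h3

/-- If cutting a flat by a hyperplane does not raise codimension, the flat
is inside the hyperplane. -/
lemma subset_hyperplane_of_codim_eq {t h : Set P} (ht : G.IsFlat t)
    (hh : G.IsHyperplane h) (hne : G.codim (t ∩ h) ≠ 0)
    (heq : G.codim t = G.codim (t ∩ h)) : t ⊆ h := by
  by_contra hth
  obtain ⟨H, h1, h2, h3⟩ := exists_pres_of_codim_ne_zero hne
  have := codim_lt_of_not_subset ht hh hth h2 h3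
  omega

/-- Cutting a flat by a hyperplane not containing it raises codimension by one. -/
lemma codim_pred_of_cover {t h : Set P} (ht : G.IsFlat t) (hh : G.IsHyperplane h)
    (hth : ¬ t ⊆ h) (hne : G.codim (t ∩ h) ≠ 0) :
    G.codim t = G.codim (t ∩ h) - 1 := by
  obtain ⟨H, h1, h2, h3⟩ := exists_pres_of_codim_ne_zero hne
  obtain ⟨H', h1', h2', h3'⟩ := cover_pres H t h2 ht (h3 ▸ Set.inter_subset_left)
    (by
      rw [h3]
      intro hcon
      exact hth (by rw [← hcon]; exact Set.inter_subset_right))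
    (fun s hs hs1 hs2 => by
      rw [h3] at hs1 ⊢
      exact hyperplane_cover ht hh hth hs hs1 hs2)
  have hub : G.codim t ≤ H'.card := codim_le h1' h2'
  have hmemb := Nat.sInf_mem (⟨H'.card, H', rfl, h1', h2'⟩ :
    Set.Nonempty {n : ℕ | ∃ H : Finset (Set P), H.card = n ∧
      (∀ g ∈ H, G.IsHyperplane g) ∧ ⋂₀ ↑H = t})
  obtain ⟨H'', e1, e2, e3⟩ := hmemb
  have hlb : G.codim (t ∩ h) ≤ G.codim t + 1 := by
    calc G.codim (t ∩ h) ≤ (insert h H'').card := by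
          apply codim_le
          · intro g hg
            rcases Finset.mem_insert.mp hg with rfl | hg
            · exact hh
            · exact e2 g hg
          · rw [Finset.coe_insert, Set.sInter_insert, e3, Set.inter_comm]
        _ ≤ H''.card + 1 := Finset.card_insert_le h H''
        _ = G.codim t + 1 := by rw [e1]; rfl
  have hlt : G.codim t < G.codim (t ∩ h) := by
    rw [← h1]; exact lt_of_le_of_lt hub h3'
  omega

/-- The span of the affine part of a flat not inside a hyperplane recovers the flat. -/
lemma span_diff_hyperplane {t h : Set P} (ht : G.IsFlat t) (hh : G.IsHyperplane h)
    (hne : (t \ h).Nonempty) : G.span (t \ h) = t := by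
  apply le_antisymm (span_le ht Set.diff_subset)
  intro z hz
  by_cases hzh : z ∈ h
  · obtain ⟨x, hxt, hxh⟩ := hne
    have hxz : x ≠ z := fun h' => hxh (h' ▸ hzh)
    obtain ⟨y, hy, hyx, hyz⟩ := G.exists_third x z hxz
    have hyt : y ∈ t := ht x hxt z hz hy
    have hyh : y ∉ h := by
      intro hyh
      have hl : G.line y z = G.line x z :=
        G.line_unique x z y z hxz hy (G.right_mem_line x z) hyz
      exact hxh (hh.1 y hyh z hzh (by rw [hl]; exact G.left_mem_line x z))
    have hlxy : G.line x y = G.line x z := line_reorient hxz hy hyx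
    exact (isFlat_span _) x (subset_span (Set.mem_diff_of_mem hxt hxh))
      y (subset_span (Set.mem_diff_of_mem hyt hyh))
      (by rw [hlxy]; exact G.right_mem_line x z)
  · exact subset_span ⟨hz, hzh⟩

/-- Two hyperplanes with the same ideal part and a common affine point coincide. -/
lemma hyperplane_eq_of_common_ideal {h h' hinf : Set P} (hh : G.IsHyperplane h)
    (hh' : G.IsHyperplane h') (hhinf : G.IsHyperplane hinf)
    (hid : h ∩ hinf = h' ∩ hinf) {x : P} (hx : x ∈ h) (hx' : x ∈ h')
    (hxinf : x ∉ hinf) : h = h' := by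
  have key : h ⊆ h' := by
    intro y hy
    by_cases hyinf : y ∈ hinf
    · have : y ∈ h' ∩ hinf := hid ▸ (Set.mem_inter hy hyinf)
      exact this.1
    by_cases hyx : y = x
    · exact hyx ▸ hx'
    obtain ⟨z, hzinf, hzl⟩ := line_meets_hyperplane hhinf hxinf (fun h0 => hyx h0.symm)
    have hzh : z ∈ h := hh.1 x hx y hy hzl
    have hzh' : z ∈ h' := by
      have : z ∈ h' ∩ hinf := hid ▸ (Set.mem_inter hzh hzinf)
      exact this.1
    have hzx : z ≠ x := fun h0 => hxinf (h0 ▸ hzinf)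
    have hl : G.line x z = G.line x y := line_reorient (fun h0 => hyx h0.symm) hzl hzx
    exact hh'.1 x hx' z hzh' (by rw [hl]; exact G.right_mem_line x y)
  rcases hh.2.2 h' hh'.1 key with h0 | h0
  · exact h0.symm
  · exact absurd h0 hh'.2.1

end ProjGeom

/-! ### Synthetic affinographic arrangements -/

/-- A synthetic affinographic arrangement of hyperplanes in the affine geometry
obtained from the projective geometry `G` by deleting the ideal hyperplane `hinf`:
a family of hyperplanes `hP e` (given by their projective completions, with affine
parts `hP e \ hinf`), with parallel classes indexed by the edges of a graph `Δ` with
links only via the surjection `π`; hyperplanes in the class of `f` have common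
ideal part `ideal f`, and the matroid of the ideal parts (rank = codimension inside
`hinf`) is the graphic matroid of `Δ`. -/
def IsAffinographic {P N E E' : Type*} [Fintype N] (G : ProjGeom P) (hinf : Set P)
    (hP : E → Set P) (Δ : MGraph N E') (π : E → E') (ideal : E' → Set P) : Prop :=
  G.IsHyperplane hinf ∧ (∀ f : E', Δ.IsLink f) ∧ Function.Surjective π ∧
  Function.Injective hP ∧ Function.Injective ideal ∧
  (∀ e : E, G.IsHyperplane (hP e) ∧ hP e ≠ hinf ∧ hP e ∩ hinf = ideal (π e)) ∧
  ∀ S : Finset E', Δ.graphicRk (↑S : Set E') = G.codim (hinf ∩ ⋂ f ∈ S, ideal f) - 1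

/-- The underlying graph of the biased graph `Ω(A)` of an affinographic
arrangement: each edge of `Δ` is replaced by the edges of its parallel class. -/
def affinoGraph {N E E' : Type*} (Δ : MGraph N E') (π : E → E') : MGraph N E :=
  ⟨fun e => Δ.ends (π e)⟩

/-- The affine intersection `t_A(S)` of the hyperplanes of `S`. -/
def affInter {P E : Type*} (hinf : Set P) (hP : E → Set P) (S : Set E) : Set P :=
  ⋂ e ∈ S, (hP e \ hinf)

/-- The balanced circles of `Ω(A)`: digons over a single edge of `Δ` are unbalanced;
any other circle is balanced iff its affine intersection is nonempty. -/
def affinoBal {P N E E' : Type*} (_G : ProjGeom P) (hinf : Set P) (hP : E → Set P)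
    (Δ : MGraph N E') (π : E → E') : Set (Finset E) :=
  {C | (affinoGraph Δ π).IsCircle C ∧ ¬(∃ f : E', ∀ e ∈ C, π e = f) ∧
    (affInter hinf hP ↑C).Nonempty}

/-! ### Coordinatized projective spaces -/

/-- The rank of a finite set of points of a coordinatized projective space:
the dimension of the linear span of representative vectors. -/
noncomputable def projRank (F : Type*) {V : Type*} [DivisionRing F] [AddCommGroup V]
    [Module F V] (A : Finset (Projectivization F V)) : ℕ :=
  Module.finrank F ↥(Submodule.span F (Projectivization.rep '' (↑A : Set (Projectivization F V))))

/-- The edge set of the full biased graph `Ω^•`: the edges of `Ω` together with a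
new half edge at every node not already supporting one. -/
def FullE {N E : Type*} (Ω : BiasedGraph N E) : Type _ :=
  E ⊕ {v : N // ∀ e : E, Ω.ends e ≠ ({v} : Finset N)}

/-- The underlying graph of the full biased graph `Ω^•`. -/
def fullGraph {N E : Type*} (Ω : BiasedGraph N E) : MGraph N (FullE Ω) :=
  ⟨Sum.elim Ω.ends (fun v => {v.val})⟩

/-- The balanced circles of the full biased graph `Ω^•` (circles avoid half edges). -/
def fullBal {N E : Type*} (Ω : BiasedGraph N E) : Set (Finset (FullE Ω)) :=
  {C | ∃ C₀ ∈ Ω.Bal, C = C₀.image Sum.inl}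

/-! ## Statement 17 -/

/-- Let `A` be a synthetic affinographic arrangement with
constructed biased graph `Ω(A)` and `t_A(S) = ⋂_{e∈S} h_e`, and let `C` be a
circle of `Ω(A)`.  If `C` is balanced, then for every `e ∈ C` one has
`t_A(C) = t_A(C∖e) ≠ ∅` and the codimension of (the projective completion of)
`t_A(C)` is `#C − 1`; if `C` is unbalanced, then `t_A(C) = ∅`. -/
theorem stmt17 {P N E E' : Type*} [Fintype N] (G : ProjGeom P)
    (hinf : Set P) (hP : E → Set P) (Δ : MGraph N E') (π : E → E')
    (ideal : E' → Set P)
    (haff : IsAffinographic G hinf hP Δ π ideal)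
    (C : Finset E) (hC : (affinoGraph Δ π).IsCircle C) :
    (C ∈ affinoBal G hinf hP Δ π →
      (affInter hinf hP (↑C : Set E)).Nonempty ∧
      (∀ e ∈ C, affInter hinf hP (↑C : Set E)
        = affInter hinf hP (↑(C.erase e) : Set E)) ∧
      G.codim (G.span (affInter hinf hP (↑C : Set E))) = C.card - 1) ∧
    (C ∉ affinoBal G hinf hP Δ π → affInter hinf hP (↑C : Set E) = ∅) := by
  classical
  obtain ⟨hhinf, hlinks, hπ, hhPinj, hidinj, hideal, hrk⟩ := haff
  have hends : ∀ e : E, (affinoGraph Δ π).ends e = Δ.ends (π e) := fun _ => rfl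
  have hn2 : 2 ≤ C.card := hC.two_le_card
  have hnm : C.card ≤ Fintype.card N := hC.card_nodesOf ▸ Finset.card_le_univ _
  have hmem : ∀ (S : Finset E) (x : P),
      x ∈ affInter hinf hP ↑S ↔ ∀ e ∈ S, x ∈ hP e ∧ x ∉ hinf := by
    intro S x
    unfold affInter
    simp [Set.mem_iInter, Set.mem_diff]
  -- the codimension of the common ideal flat of any edge set with the same components
  have hcomp : ∀ B : Finset E,
      (affinoGraph Δ π).components ↑B = (affinoGraph Δ π).components ↑C →
      G.codim (hinf ∩ ⋂ f ∈ B.image π, ideal f) = C.card := by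
    intro B hB
    have h1 : Δ.numComponents ↑(B.image π) = (affinoGraph Δ π).numComponents ↑B := by
      unfold MGraph.numComponents
      rw [MGraph.components_image hends]
    have h2 : (affinoGraph Δ π).numComponents ↑B
        = (affinoGraph Δ π).numComponents ↑C := by
      unfold MGraph.numComponents
      rw [hB]
    have h3 : (affinoGraph Δ π).numComponents ↑C = Fintype.card N - C.card + 1 :=
      hC.numComponents_eq
    have h4 : Δ.graphicRk ↑(B.image π) = C.card - 1 := by
      unfold MGraph.graphicRk
      rw [h1, h2, h3]
      omega
    have h5 := hrk (B.image π)
    rw [h4] at h5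
    by_cases h0 : G.codim (hinf ∩ ⋂ f ∈ B.image π, ideal f) = 0
    · rw [h0] at h5
      omega
    · omega
  have hcodimC : G.codim (hinf ∩ ⋂ f ∈ C.image π, ideal f) = C.card := hcomp C rfl
  -- the common ideal flat of C minus an edge lies in that edge's hyperplane
  have hflatTe : ∀ e : E, G.IsFlat (hinf ∩ ⋂ f ∈ (C.erase e).image π, ideal f) := by
    intro e
    refine ProjGeom.isFlat_inter hhinf.1 (ProjGeom.isFlat_biInter ?_)
    intro f hf
    obtain ⟨e'', _, rfl⟩ := Finset.mem_image.mp hf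
    rw [← (hideal e'').2.2]
    exact ProjGeom.isFlat_inter (hideal e'').1.1 hhinf.1
  have hTsplit : ∀ e ∈ C, hinf ∩ ⋂ f ∈ C.image π, ideal f
      = (hinf ∩ ⋂ f ∈ (C.erase e).image π, ideal f) ∩ hP e := by
    intro e he
    have himg : C.image π = insert (π e) ((C.erase e).image π) := by
      conv_lhs => rw [← Finset.insert_erase he]
      rw [Finset.image_insert]
    rw [himg, Finset.set_biInter_insert]
    have hid : ∀ x : P, x ∈ ideal (π e) ↔ x ∈ hP e ∩ hinf := by
      intro x
      rw [(hideal e).2.2]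
    ext x
    simp only [Set.mem_inter_iff]
    rw [hid x]
    simp only [Set.mem_inter_iff]
    tauto
  have hsub : ∀ e ∈ C, (hinf ∩ ⋂ f ∈ (C.erase e).image π, ideal f) ⊆ hP e := by
    intro e he
    have hcodimE : G.codim (hinf ∩ ⋂ f ∈ (C.erase e).image π, ideal f) = C.card := by
      apply hcomp
      exact hC.components_erase he
    apply ProjGeom.subset_hyperplane_of_codim_eq (hflatTe e) (hideal e).1
    · rw [← hTsplit e he, hcodimC]
      omega
    · rw [← hTsplit e he, hcodimC, hcodimE]
  constructor
  · -- balanced case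
    intro hCb
    obtain ⟨-, hnd, hne⟩ := hCb
    have herase : ∀ e ∈ C, affInter hinf hP ↑C = affInter hinf hP ↑(C.erase e) := by
      intro e he
      apply Set.Subset.antisymm
      · intro x hx
        rw [hmem] at hx ⊢
        exact fun e'' he'' => hx e'' (Finset.mem_of_mem_erase he'')
      · intro x hx
        rw [hmem] at hx ⊢
        obtain ⟨y, hy⟩ := hne
        rw [hmem] at hy
        -- x is off the ideal hyperplane
        obtain ⟨e₁, he₁⟩ : (C.erase e).Nonempty := by
          rw [← Finset.card_pos, Finset.card_erase_of_mem he]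
          omega
        have hxinf : x ∉ hinf := (hx e₁ he₁).2
        -- x lies in every hyperplane of C except possibly hP e; show x ∈ hP e
        have hxPe : x ∈ hP e := by
          have hyPe : y ∈ hP e := (hy e he).1
          by_cases hxy : x = y
          · exact hxy ▸ hyPe
          obtain ⟨z, hzinf, hzl⟩ := ProjGeom.line_meets_hyperplane hhinf hxinf hxy
          -- z lies in the common ideal flat
          have hzTe : z ∈ hinf ∩ ⋂ f ∈ (C.erase e).image π, ideal f := by
            refine ⟨hzinf, ?_⟩
            rw [Finset.set_biInter_finset_image, Set.mem_iInter₂]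
            intro e'' he''
            rw [← (hideal e'').2.2]
            refine ⟨?_, hzinf⟩
            exact (hideal e'').1.1 x (hx e'' he'').1 y
              (hy e'' (Finset.mem_of_mem_erase he'')).1 hzl
          have hzPe : z ∈ hP e := hsub e he hzTe
          -- x is on the line through y and z, both in hP e
          have hzy : z ≠ y := fun h => (hy e he).2 (h ▸ hzinf)
          have hzx : z ≠ x := fun h => hxinf (h ▸ hzinf)
          have hl : G.line y z = G.line y x := by
            apply ProjGeom.line_reorient (fun h => hxy h.symm) _ hzy
            rw [G.line_symm]
            exact hzl
          exact (hideal e).1.1 y hyPe z hzPe (by rw [hl]; exact G.right_mem_line y x)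
        intro e'' he''
        by_cases hee : e'' = e
        · exact hee ▸ ⟨hxPe, hxinf⟩
        · exact hx e'' (Finset.mem_erase.mpr ⟨hee, he''⟩)
    refine ⟨hne, herase, ?_⟩
    -- the codimension claim
    have haffeq : affInter hinf hP ↑C = (⋂ e ∈ C, hP e) \ hinf := by
      obtain ⟨e₀, he₀⟩ := hC.1
      ext x
      rw [hmem, Set.mem_diff, Set.mem_iInter₂]
      constructor
      · intro h
        exact ⟨fun e he => (h e he).1, (h e₀ he₀).2⟩
      · intro h e he
        exact ⟨h.1 e he, h.2⟩
    have htflat : G.IsFlat (⋂ e ∈ C, hP e) :=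
      ProjGeom.isFlat_biInter (fun e _ => (hideal e).1.1)
    have htinf : (⋂ e ∈ C, hP e) ∩ hinf = hinf ∩ ⋂ f ∈ C.image π, ideal f := by
      rw [Finset.set_biInter_finset_image]
      ext x
      simp only [Set.mem_inter_iff, Set.mem_iInter]
      constructor
      · intro h
        refine ⟨h.2, fun e he => ?_⟩
        rw [← (hideal e).2.2]
        exact ⟨h.1 e he, h.2⟩
      · intro h
        refine ⟨fun e he => ?_, h.1⟩
        have := h.2 e he
        rw [← (hideal e).2.2] at this
        exact this.1
    have hnsub : ¬ (⋂ e ∈ C, hP e) ⊆ hinf := by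
      obtain ⟨x, hx⟩ := hne
      rw [haffeq] at hx
      exact fun hcon => hx.2 (hcon hx.1)
    have hcodimt : G.codim (⋂ e ∈ C, hP e) = C.card - 1 := by
      rw [ProjGeom.codim_pred_of_cover htflat hhinf hnsub
        (by rw [htinf, hcodimC]; omega), htinf, hcodimC]
    rw [haffeq, ProjGeom.span_diff_hyperplane htflat hhinf (by rw [← haffeq]; exact hne)]
    exact hcodimt
  · -- unbalanced case
    intro hCnb
    by_contra hcon
    have hne : (affInter hinf hP ↑C).Nonempty := Set.nonempty_iff_ne_empty.mpr hcon
    by_cases hdig : ∃ f : E', ∀ e ∈ C, π e = f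
    · obtain ⟨f, hf⟩ := hdig
      obtain ⟨x, hx⟩ := hne
      rw [hmem] at hx
      obtain ⟨e₁, he₁, e₂, he₂, h12⟩ := Finset.one_lt_card.mp hn2
      have hid12 : hP e₁ ∩ hinf = hP e₂ ∩ hinf := by
        rw [(hideal e₁).2.2, (hideal e₂).2.2, hf e₁ he₁, hf e₂ he₂]
      have heq : hP e₁ = hP e₂ :=
        ProjGeom.hyperplane_eq_of_common_ideal (hideal e₁).1 (hideal e₂).1 hhinf hid12
          (hx e₁ he₁).1 (hx e₂ he₂).1 (hx e₁ he₁).2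
      exact h12 (hhPinj heq)
    · exact hCnb ⟨hC, hdig, hne⟩
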